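/- arXiv:1309.2340 — 2 statements merged into one kernel-verified Lean document; each statement's English description precedes it below -/
import Mathlib

section
/- The map sending h ∈ QP to the function f: T_n^d → {0,1,2} defined by f(π(v)) = h(v) mod 3 (which is well defined) is a bijection from QP onto col(T_n^d), the set of proper 3-colorings of T_n^d taking the value 0 at the vertex 0. -/
namespace P3C

def latticeGraph (d : ℕ) : SimpleGraph (Fin d → ℤ) where
  Adj v w := ∃ i, (w i = v i + 1 ∨ w i = v i - 1) ∧ ∀ j, j ≠ i → w j = v j
  symm := ⟨by
    rintro v w ⟨i, h1, h2⟩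
    exact ⟨i, by omega, fun j hj => (h2 j hj).symm⟩⟩
  loopless := ⟨by
    rintro v ⟨i, h1, _⟩
    omega⟩

def vplus (d : ℕ) (U : Set (Fin d → ℤ)) : Set (Fin d → ℤ) :=
  {u | u ∈ U ∨ ∃ w ∈ U, (latticeGraph d).Adj u w}

def vminus (d : ℕ) (U : Set (Fin d → ℤ)) : Set (Fin d → ℤ) :=
  {u | u ∈ U ∧ ∀ w, (latticeGraph d).Adj u w → w ∈ U}

def inBdry (d : ℕ) (U : Set (Fin d → ℤ)) : Set (Fin d → ℤ) := U \ vminus d U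

def outBdry (d : ℕ) (U : Set (Fin d → ℤ)) : Set (Fin d → ℤ) := vplus d U \ U

def ConnectedIn {V : Type*} (G : SimpleGraph V) (S : Set V) : Prop := (G.induce S).Connected

def BiConnected (d : ℕ) (U : Set (Fin d → ℤ)) : Prop :=
  U ≠ ∅ ∧ U ≠ Set.univ ∧ ConnectedIn (latticeGraph d) U ∧ ConnectedIn (latticeGraph d) Uᶜ

def edgeBdry (d : ℕ) (U : Set (Fin d → ℤ)) : Set ((Fin d → ℤ) × (Fin d → ℤ)) :=
  {p | (latticeGraph d).Adj p.1 p.2 ∧ ((p.1 ∈ U ∧ p.2 ∉ U) ∨ (p.2 ∈ U ∧ p.1 ∉ U))}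

def IsFourCycle (d : ℕ) (v00 v01 v11 v10 : Fin d → ℤ) : Prop :=
  (latticeGraph d).Adj v00 v01 ∧ (latticeGraph d).Adj v01 v11 ∧
  (latticeGraph d).Adj v11 v10 ∧ (latticeGraph d).Adj v10 v00 ∧ v00 ≠ v11 ∧ v01 ≠ v10

def BoundaryDisjoint (d : ℕ) (U1 U2 : Set (Fin d → ℤ)) : Prop :=
  edgeBdry d U1 ∩ edgeBdry d U2 = ∅ ∧
  ¬ ∃ v00 v01 v11 v10, IsFourCycle d v00 v01 v11 v10 ∧
    v00 ∈ U1ᶜ ∩ U2ᶜ ∧ v01 ∈ U1ᶜ ∩ U2 ∧ v11 ∈ U1 ∩ U2 ∧ v10 ∈ U1 ∩ U2ᶜ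

def translates (n d : ℕ) (U : Set (Fin d → ℤ)) : Set (Set (Fin d → ℤ)) :=
  {W | ∃ x : Fin d → ℤ, (∀ i, (n : ℤ) ∣ x i) ∧ W = (fun u => u + x) '' U}

def TranslationRespecting (n d : ℕ) (U : Set (Fin d → ℤ)) : Prop :=
  BiConnected d U ∧
  ∀ U1 ∈ translates n d U, ∀ U2 ∈ translates n d U, U1 ≠ U2 → BoundaryDisjoint d U1 U2

def TypeZero (n d : ℕ) (U : Set (Fin d → ℤ)) : Prop :=
  TranslationRespecting n d U ∧ (translates n d U).Nontrivial ∧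
  ∀ A ∈ translates n d U, ∀ B ∈ translates n d U, A ⊆ B ∨ B ⊆ A

noncomputable def setDist (d : ℕ) (A B : Set (Fin d → ℤ)) : ℕ :=
  sInf {k | ∃ a ∈ A, ∃ b ∈ B, (latticeGraph d).dist a b = k}

def IsLatticeHHF (d : ℕ) (h : (Fin d → ℤ) → ℤ) : Prop :=
  ∀ v w, (latticeGraph d).Adj v w → |h v - h w| = 1

def homZeroLattice (d : ℕ) : Set ((Fin d → ℤ) → ℤ) :=
  {h | IsLatticeHHF d h ∧ h 0 = 0}

def IsQP (n d : ℕ) (m : Fin d → ℤ) (h : (Fin d → ℤ) → ℤ) : Prop :=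
  h ∈ homZeroLattice d ∧ ∀ (v : Fin d → ℤ) (i : Fin d), h (v + Pi.single i (n : ℤ)) = h v + m i

def QPset (n d : ℕ) : Set ((Fin d → ℤ) → ℤ) :=
  {h | ∃ m : Fin d → ℤ, (∀ i, (6 : ℤ) ∣ m i ∧ |m i| ≤ (n : ℤ)) ∧ IsQP n d m h}

def compIn {V : Type*} (G : SimpleGraph V) (S : Set V) (u : V) : Set V :=
  {w | ∃ (hu : u ∈ S) (hw : w ∈ S), (G.induce S).Reachable ⟨u, hu⟩ ⟨w, hw⟩}

def subLL (d : ℕ) (h : (Fin d → ℤ) → ℤ) (k : ℤ) (u : Fin d → ℤ) : Set (Fin d → ℤ) :=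
  compIn (latticeGraph d) {w | h w ≠ k + 1} u

def subLC (d : ℕ) (h : (Fin d → ℤ) → ℤ) (k : ℤ) (u v : Fin d → ℤ) : Set (Fin d → ℤ) :=
  (compIn (latticeGraph d) (subLL d h k u)ᶜ v)ᶜ

def IsSublevelComponent (d : ℕ) (h : (Fin d → ℤ) → ℤ) (A : Set (Fin d → ℤ)) : Prop :=
  ∃ u v k, h u ≤ k ∧ k < h v ∧ A = subLC d h k u v

def sepComps (d : ℕ) (h : (Fin d → ℤ) → ℤ) (u v : Fin d → ℤ) : Set (Set (Fin d → ℤ)) :=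
  {A | IsSublevelComponent d h A ∧ u ∈ A ∧ v ∉ A}

def cycleEdge (d : ℕ) (v00 v01 v11 v10 : Fin d → ℤ) (e : (Fin d → ℤ) × (Fin d → ℤ)) : Prop :=
  ({e.1, e.2} : Set (Fin d → ℤ)) = {v00, v01} ∨ ({e.1, e.2} : Set (Fin d → ℤ)) = {v01, v11} ∨
  ({e.1, e.2} : Set (Fin d → ℤ)) = {v11, v10} ∨ ({e.1, e.2} : Set (Fin d → ℤ)) = {v10, v00}

def bdryGraph (d : ℕ) (U : Set (Fin d → ℤ)) : SimpleGraph (Fin d → ℤ) where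
  Adj u v := u ≠ v ∧ ∃ eu ev, eu ∈ edgeBdry d U ∧ ev ∈ edgeBdry d U ∧
    (u = eu.1 ∨ u = eu.2) ∧ (v = ev.1 ∨ v = ev.2) ∧
    ∃ a b c e, IsFourCycle d a b c e ∧ cycleEdge d a b c e eu ∧ cycleEdge d a b c e ev
  symm := ⟨by
    rintro u v ⟨hne, eu, ev, h1, h2, h3, h4, a, b, c, e, hc, hcu, hcv⟩
    exact ⟨hne.symm, ev, eu, h2, h1, h4, h3, a, b, c, e, hc, hcv, hcu⟩⟩
  loopless := ⟨fun u h => h.1 rfl⟩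


def torusAdj (n d : ℕ) (v w : Fin d → ZMod n) : Prop :=
  ∃ i, (w i = v i + 1 ∨ w i = v i - 1) ∧ ∀ j, j ≠ i → w j = v j

def IsProperColoring (n d : ℕ) (f : (Fin d → ZMod n) → Fin 3) : Prop :=
  ∀ v w, torusAdj n d v w → f v ≠ f w

def torusColorings (n d : ℕ) : Set ((Fin d → ZMod n) → Fin 3) :=
  {f | IsProperColoring n d f}

def colZero (n d : ℕ) : Set ((Fin d → ZMod n) → Fin 3) :=
  {f | IsProperColoring n d f ∧ f 0 = 0}

def IsTorusHHF (n d : ℕ) (h : (Fin d → ZMod n) → ℤ) : Prop :=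
  ∀ v w, torusAdj n d v w → |h v - h w| = 1

def torusHomZero (n d : ℕ) : Set ((Fin d → ZMod n) → ℤ) :=
  {h | IsTorusHHF n d h ∧ h 0 = 0}

noncomputable def cp (n d : ℕ) (par : ℕ) (k : Fin 3) (f : (Fin d → ZMod n) → Fin 3) : ℝ :=
  (Nat.card {v : Fin d → ZMod n | (∑ j, (v j).val) % 2 = par ∧ f v = k} : ℝ) /
  (Nat.card {v : Fin d → ZMod n | (∑ j, (v j).val) % 2 = par} : ℝ)

def latticeProj (n d : ℕ) (v : Fin d → ℤ) : Fin d → ZMod n := fun i => (v i : ZMod n)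

def toCol (n d : ℕ) (h : (Fin d → ℤ) → ℤ) (x : Fin d → ZMod n) : Fin 3 :=
  ⟨(h (fun i => ((x i).val : ℤ)) % 3).toNat, by
    have h1 : (0 : ℤ) ≤ h (fun i => ((x i).val : ℤ)) % 3 := Int.emod_nonneg _ (by norm_num)
    have h2 : h (fun i => ((x i).val : ℤ)) % 3 < 3 := Int.emod_lt_of_pos _ (by norm_num)
    omega⟩

end P3C

/-!
A proper 3-colouring `c` of `ℤ^d` with `c 0 = 0` has a unique height function `h` with `h 0 = 0`
and `h ≡ c (mod 3)`: the `±1` lifts of the colour differences form a curl-free 1-form, which is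
exact on `ℤ^d`, and two height functions with the same residues mod 3 have equal increments.
Applied to the pull-back of a colouring of the torus, uniqueness makes the height quasi-periodic;
each slope is `≡ 0 (mod 3)` because the colouring is periodic, even because `h` has the parity
of the coordinate sum and `n` is even, and at most `n` in absolute value since `h` is
1-Lipschitz. Conversely the slopes of `h ∈ QP` are divisible by 3, so `h mod 3` descends to the
torus.
-/

open Function

section Potential

variable {G : Type*} [AddCommGroup G]

theorem exists_int_antideriv (g : ℤ → G) :
    ∃ F : ℤ → G, F 0 = 0 ∧ ∀ a, F (a + 1) = F a + g a := by
  refine ⟨fun a => ∑ t ∈ Finset.Ico 0 a, g t - ∑ t ∈ Finset.Ico a 0, g t, by simp, fun a => ?_⟩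
  beta_reduce
  rcases le_or_gt 0 a with ha | ha
  · rw [← Finset.insert_Ico_right_eq_Ico_add_one ha, Finset.sum_insert (by simp),
      Finset.Ico_eq_empty_of_le ha, Finset.Ico_eq_empty_of_le (by omega : (0 : ℤ) ≤ a + 1)]
    simp [add_comm]
  · rw [← Finset.insert_Ico_add_one_left_eq_Ico ha, Finset.sum_insert (by simp),
      Finset.Ico_eq_empty_of_le ha.le, Finset.Ico_eq_empty_of_le (by omega : a + 1 ≤ 0)]
    simp

theorem Fin.cons_add_single_zero {d : ℕ} (a : ℤ) (w : Fin d → ℤ) :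
    (Fin.cons a w : Fin (d + 1) → ℤ) + Pi.single 0 1 = Fin.cons (a + 1) w := by
  ext i; refine Fin.cases ?_ (fun j => ?_) i <;> simp

theorem Fin.cons_add_single_succ {d : ℕ} (a : ℤ) (w : Fin d → ℤ) (j : Fin d) :
    (Fin.cons a w : Fin (d + 1) → ℤ) + Pi.single j.succ 1 = Fin.cons a (w + Pi.single j 1) := by
  ext i; refine Fin.cases ?_ (fun k => ?_) i <;> simp [Pi.single_apply]

/-- Discrete Poincaré lemma. Induction on `d`: a potential on the slice `{0} × ℤ^d` is extended by
integrating along the first coordinate. -/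
theorem exists_potential_of_curl_free :
    ∀ {d : ℕ} (s : (Fin d → ℤ) → Fin d → G),
      (∀ v i j, s v i + s (v + Pi.single i 1) j = s v j + s (v + Pi.single j 1) i) →
      ∃ h : (Fin d → ℤ) → G, h 0 = 0 ∧ ∀ v i, h (v + Pi.single i 1) = h v + s v i
  | 0, _, _ => ⟨0, rfl, fun _ i => i.elim0⟩
  | d + 1, s, hs => by
    obtain ⟨h₀, h₀_zero, h₀_step⟩ := exists_potential_of_curl_free
      (fun w j => s (Fin.cons 0 w) j.succ) fun w i j => by
        simpa only [Fin.cons_add_single_succ] using hs (Fin.cons 0 w) i.succ j.succ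
    choose F hF_zero hF_step using fun w => exists_int_antideriv fun a => s (Fin.cons a w) 0
    have hF_succ : ∀ w j a, F (w + Pi.single j 1) a - F w a =
        s (Fin.cons a w) j.succ - s (Fin.cons 0 w) j.succ := by
      intro w j
      have hper : Periodic
          (fun a => F (w + Pi.single j 1) a - F w a - s (Fin.cons a w) j.succ) 1 := fun a => by
        have hcurl := hs (Fin.cons a w) 0 j.succ
        rw [Fin.cons_add_single_zero, Fin.cons_add_single_succ] at hcurl
        simp only [hF_step]
        linear_combination (norm := abel) -hcurl
      intro a
      have := hper.int_mul_eq a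
      simp only [Int.cast_id, mul_one, hF_zero, sub_self, zero_sub] at this
      linear_combination (norm := abel) this
    refine ⟨fun v => h₀ (Fin.tail v) + F (Fin.tail v) (v 0), ?_, ?_⟩
    · show h₀ 0 + F 0 0 = 0
      simp [h₀_zero, hF_zero]
    intro v i
    obtain ⟨a, w, rfl⟩ : ∃ a w, v = Fin.cons a w := ⟨v 0, Fin.tail v, (Fin.cons_self_tail v).symm⟩
    refine Fin.cases ?_ (fun j => ?_) i
    · simp [Fin.cons_add_single_zero, hF_step, add_assoc]
    · simp only [Fin.cons_add_single_succ, Fin.tail_cons, Fin.cons_zero, h₀_step]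
      linear_combination (norm := abel) hF_succ w j a

end Potential

section Periods

variable {d : ℕ} {α : Type*}

theorem apply_add_smul_eq_of_apply_add_single {g : (Fin d → ℤ) → α} {c : ℤ}
    (hg : ∀ v i, g (v + Pi.single i c) = g v) (k v : Fin d → ℤ) : g (v + c • k) = g v := by
  induction k using Pi.single_induction generalizing v with
  | zero => simp
  | add x y hx hy => rw [smul_add, ← add_assoc, hy, hx]
  | single i m =>
    have hper : Periodic (fun t => g (v + Pi.single i t)) c := fun t => by
      show g (v + Pi.single i (t + c)) = _
      rw [Pi.single_add, ← add_assoc, hg]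
    rw [← Pi.single_smul, smul_eq_mul, mul_comm]
    simpa using hper.int_mul_eq m

theorem eq_apply_zero_of_apply_add_single {g : (Fin d → ℤ) → α}
    (hg : ∀ v i, g (v + Pi.single i 1) = g v) (v : Fin d → ℤ) : g v = g 0 := by
  simpa using apply_add_smul_eq_of_apply_add_single hg v 0

end Periods

namespace P3C

section Lattice

variable {d : ℕ}

theorem latticeGraph_adj_add_single (v : Fin d → ℤ) (i : Fin d) {c : ℤ} (hc : c = 1 ∨ c = -1) :
    (latticeGraph d).Adj v (v + Pi.single i c) :=
  ⟨i, by simp only [Pi.add_apply, Pi.single_eq_same]; omega,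
    fun j hj => by simp [Pi.single_eq_of_ne hj]⟩

theorem latticeGraph_adj_iff {v w : Fin d → ℤ} :
    (latticeGraph d).Adj v w ↔ ∃ i, w = v + Pi.single i 1 ∨ v = w + Pi.single i 1 := by
  refine ⟨fun ⟨i, hi, hj⟩ => ⟨i, ?_⟩, fun ⟨i, hw⟩ => ?_⟩
  · have hrest : ∀ u u' : Fin d → ℤ, u' i = u i + 1 → (∀ j, j ≠ i → u' j = u j) →
        u' = u + Pi.single i 1 := fun u u' hi hj => by
      ext k
      by_cases hk : k = i
      · subst hk; simp [hi]
      · simp [Pi.single_eq_of_ne hk, hj k hk]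
    rcases hi with hi | hi
    · exact .inl (hrest v w hi hj)
    · exact .inr (hrest w v (by omega) fun j hj' => (hj j hj').symm)
  · rcases hw with rfl | rfl
    · exact latticeGraph_adj_add_single v i (.inl rfl)
    · exact (latticeGraph_adj_add_single w i (.inl rfl)).symm

theorem isLatticeHHF_iff {h : (Fin d → ℤ) → ℤ} :
    IsLatticeHHF d h ↔ ∀ v i, |h (v + Pi.single i 1) - h v| = 1 := by
  refine ⟨fun hh v i => ?_, fun hh v w hvw => ?_⟩
  · rw [abs_sub_comm]
    exact hh _ _ (latticeGraph_adj_add_single v i (.inl rfl))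
  · obtain ⟨i, rfl | rfl⟩ := latticeGraph_adj_iff.mp hvw
    · rw [abs_sub_comm]; exact hh v i
    · exact hh w i

theorem IsLatticeHHF.comp_add_right {h : (Fin d → ℤ) → ℤ} (hh : IsLatticeHHF d h)
    (x : Fin d → ℤ) (k : ℤ) : IsLatticeHHF d (fun v => h (v + x) - k) := by
  rw [isLatticeHHF_iff] at hh ⊢
  intro v i
  simpa [add_right_comm v] using hh (v + x) i

theorem IsLatticeHHF.emod_two {h : (Fin d → ℤ) → ℤ} (hh : IsLatticeHHF d h) (h0 : h 0 = 0)
    (v : Fin d → ℤ) : h v % 2 = (∑ i, v i) % 2 := by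
  have hconst := eq_apply_zero_of_apply_add_single (g := fun v => (h v - ∑ i, v i) % 2)
    (fun v i => by
      have hstep := isLatticeHHF_iff.mp hh v i
      have hsum : ∑ j, (v + Pi.single i 1 : Fin d → ℤ) j = ∑ j, v j + 1 := by
        simp [Finset.sum_add_distrib]
      simp only [hsum]
      rw [abs_eq zero_le_one] at hstep
      omega) v
  simp only [h0, Pi.zero_apply, Finset.sum_const_zero, sub_zero] at hconst
  omega

theorem IsLatticeHHF.abs_apply_single_le {h : (Fin d → ℤ) → ℤ} (hh : IsLatticeHHF d h)
    (h0 : h 0 = 0) (j : Fin d) (k : ℕ) : |h (Pi.single j (k : ℤ))| ≤ k := by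
  induction k with
  | zero => simp [h0]
  | succ k ih =>
    have hstep := isLatticeHHF_iff.mp hh (Pi.single j (k : ℤ)) j
    rw [← Pi.single_add] at hstep
    push_cast
    rw [abs_le] at ih ⊢
    rw [abs_eq zero_le_one] at hstep
    omega

/-- The two increments across an edge are `±1` and congruent mod `3`, hence equal. -/
theorem IsLatticeHHF.ext_of_emod_three {h₁ h₂ : (Fin d → ℤ) → ℤ} (hh₁ : IsLatticeHHF d h₁)
    (hh₂ : IsLatticeHHF d h₂) (h0 : h₁ 0 = h₂ 0) (hmod : ∀ v, h₁ v % 3 = h₂ v % 3) :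
    h₁ = h₂ := by
  have hconst := eq_apply_zero_of_apply_add_single (g := fun v => h₁ v - h₂ v) fun v i => by
    have hs₁ := isLatticeHHF_iff.mp hh₁ v i
    have hs₂ := isLatticeHHF_iff.mp hh₂ v i
    have hm₀ := hmod v
    have hm₁ := hmod (v + Pi.single i 1)
    rw [abs_eq zero_le_one] at hs₁ hs₂
    omega
  funext v
  linarith [hconst v]

def colorStep (a b : Fin 3) : ℤ := if b = a + 1 then 1 else -1

theorem colorStep_spec : ∀ {a b : Fin 3}, a ≠ b →
    (colorStep a b = 1 ∨ colorStep a b = -1) ∧ ((a : ℕ) + colorStep a b) % 3 = (b : ℕ) := by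
  unfold colorStep; decide

/-- The `±1` lifts of the colour steps form a curl-free 1-form: around a unit square they sum to
`0` mod `3` and lie in `{-4, -2, 0, 2, 4}`. -/
theorem exists_isLatticeHHF_emod_three_eq (c : (Fin d → ℤ) → Fin 3)
    (hc : ∀ v i, c v ≠ c (v + Pi.single i 1)) (hc0 : c 0 = 0) :
    ∃ h, IsLatticeHHF d h ∧ h 0 = 0 ∧ ∀ v, h v % 3 = (c v : ℕ) := by
  obtain ⟨h, h0, hstep⟩ := exists_potential_of_curl_free
    (fun v i => colorStep (c v) (c (v + Pi.single i 1))) fun v i j => by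
      have h₁ := colorStep_spec (hc v i)
      have h₂ := colorStep_spec (hc (v + Pi.single i 1) j)
      have h₃ := colorStep_spec (hc v j)
      have h₄ := colorStep_spec (hc (v + Pi.single j 1) i)
      rw [add_right_comm v (Pi.single j 1)] at h₄ ⊢
      omega
  refine ⟨h, isLatticeHHF_iff.mpr fun v i => ?_, h0, fun v => ?_⟩
  · rw [hstep, add_sub_cancel_left]
    rcases (colorStep_spec (hc v i)).1 with hs | hs <;> simp [hs]
  · have hconst := eq_apply_zero_of_apply_add_single
      (g := fun v => (h v - (c v : ℕ)) % 3) (fun v i => by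
        have := (colorStep_spec (hc v i)).2
        simp only [hstep]
        omega) v
    simp only [h0, hc0, Fin.val_zero, Nat.cast_zero, sub_zero, EuclideanDomain.zero_mod] at hconst
    have := (c v).isLt
    omega

end Lattice

section Torus

variable {n d : ℕ}

theorem latticeProj_zero : latticeProj n d 0 = 0 := by
  funext i; simp [latticeProj]

theorem latticeProj_add_single_natCast (v : Fin d → ℤ) (j : Fin d) :
    latticeProj n d (v + Pi.single j (n : ℤ)) = latticeProj n d v := by
  funext i
  by_cases hi : i = j
  · subst hi; simp [latticeProj]
  · simp [latticeProj, Pi.single_eq_of_ne hi]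

theorem latticeProj_lift [NeZero n] (x : Fin d → ZMod n) :
    latticeProj n d (fun i => ((x i).val : ℤ)) = x := by
  funext i; simp [latticeProj]

theorem lift_latticeProj [NeZero n] (v : Fin d → ℤ) :
    (fun i => ((latticeProj n d v i).val : ℤ)) = v + (n : ℤ) • fun i => -(v i / n) := by
  funext i
  simp only [latticeProj, ZMod.val_intCast, Int.emod_def, Pi.add_apply, Pi.smul_apply,
    smul_eq_mul]
  ring

theorem torusAdj_latticeProj_add_single (v : Fin d → ℤ) (i : Fin d) :
    torusAdj n d (latticeProj n d v) (latticeProj n d (v + Pi.single i 1)) :=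
  ⟨i, .inl (by simp [latticeProj]), fun j hj => by simp [latticeProj, Pi.single_eq_of_ne hj]⟩

theorem exists_eq_latticeProj_add_single_of_torusAdj {v : Fin d → ℤ} {y : Fin d → ZMod n}
    (hvy : torusAdj n d (latticeProj n d v) y) :
    ∃ i c, (c = 1 ∨ c = -1) ∧ y = latticeProj n d (v + Pi.single i c) := by
  obtain ⟨i, hi, hj⟩ := hvy
  have hy : ∀ c : ℤ, y i = latticeProj n d v i + c → y = latticeProj n d (v + Pi.single i c) :=
    fun c hc => funext fun k => by
      by_cases hk : k = i
      · subst hk; simp [latticeProj, hc]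
      · simp [latticeProj, Pi.single_eq_of_ne hk, hj k hk]
  rcases hi with hi | hi
  · exact ⟨i, 1, .inl rfl, hy 1 (by simp [hi])⟩
  · exact ⟨i, -1, .inr rfl, hy (-1) (by simp [hi, sub_eq_add_neg])⟩

theorem mem_homZeroLattice_of_mem_QPset {h : (Fin d → ℤ) → ℤ} (hh : h ∈ QPset n d) :
    h ∈ homZeroLattice d :=
  hh.choose_spec.2.1

theorem toCol_val (h : (Fin d → ℤ) → ℤ) (x : Fin d → ZMod n) :
    ((toCol n d h x : ℕ) : ℤ) = h (fun i => ((x i).val : ℤ)) % 3 :=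
  Int.toNat_of_nonneg (Int.emod_nonneg _ (by norm_num))

/-- Since every slope is divisible by `3`, `h mod 3` is `n`-periodic. -/
theorem toCol_latticeProj [NeZero n] {h : (Fin d → ℤ) → ℤ} (hh : h ∈ QPset n d)
    (v : Fin d → ℤ) : ((toCol n d h (latticeProj n d v) : ℕ) : ℤ) = h v % 3 := by
  obtain ⟨m, hm, -, hper⟩ := hh
  rw [toCol_val, lift_latticeProj]
  refine apply_add_smul_eq_of_apply_add_single (g := fun v => h v % 3) (fun v i => ?_) _ v
  have := (hm i).1
  simp only [hper]
  omega

theorem toCol_mem_colZero [NeZero n] {h : (Fin d → ℤ) → ℤ} (hh : h ∈ QPset n d) :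
    toCol n d h ∈ colZero n d := by
  obtain ⟨hhf, h0⟩ := mem_homZeroLattice_of_mem_QPset hh
  refine ⟨fun x y hxy hcol => ?_, Fin.ext ?_⟩
  · obtain ⟨v, rfl⟩ : ∃ v, latticeProj n d v = x := ⟨_, latticeProj_lift x⟩
    obtain ⟨i, c, hc, rfl⟩ := exists_eq_latticeProj_add_single_of_torusAdj hxy
    have hstep := hhf _ _ (latticeGraph_adj_add_single v i hc)
    have h₁ := toCol_latticeProj hh v
    have h₂ := toCol_latticeProj hh (v + Pi.single i c)
    rw [hcol] at h₁
    rw [abs_eq zero_le_one] at hstep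
    omega
  · have := toCol_val (n := n) h 0
    simp only [Pi.zero_apply, ZMod.val_zero, Nat.cast_zero] at this
    rw [← Pi.zero_def, h0] at this
    simpa using this

/-- Quasi-periodicity: `v ↦ h (v + n e_j) - h (n e_j)` has the same residues mod `3` as `h`,
hence equals `h`. -/
theorem exists_mem_QPset_toCol_eq [NeZero n] (hn : Even n) {f : (Fin d → ZMod n) → Fin 3}
    (hf : f ∈ colZero n d) : ∃ h ∈ QPset n d, toCol n d h = f := by
  obtain ⟨hproper, hf0⟩ := hf
  obtain ⟨h, hhf, h0, hmod⟩ := exists_isLatticeHHF_emod_three_eq (fun v => f (latticeProj n d v))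
    (fun v i => hproper _ _ (torusAdj_latticeProj_add_single v i)) (by simpa [latticeProj_zero])
  have hperiod : ∀ v j, h (v + Pi.single j (n : ℤ)) % 3 = h v % 3 := fun v j => by
    simp only [hmod, latticeProj_add_single_natCast]
  have hslope : ∀ j, h (Pi.single j (n : ℤ)) % 3 = 0 := fun j => by
    simpa [h0] using hperiod 0 j
  refine ⟨h, ⟨fun j => h (Pi.single j (n : ℤ)), fun j => ⟨?_, ?_⟩, ⟨hhf, h0⟩, fun v j => ?_⟩, ?_⟩
  · show (6 : ℤ) ∣ h (Pi.single j (n : ℤ))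
    have h2 := hhf.emod_two h0 (Pi.single j (n : ℤ))
    have h3 := hslope j
    simp only [Finset.sum_pi_single', Finset.mem_univ, if_true] at h2
    obtain ⟨r, hr⟩ := hn
    omega
  · exact hhf.abs_apply_single_le h0 j n
  · have hshift : (fun v => h (v + Pi.single j (n : ℤ)) - h (Pi.single j (n : ℤ))) = h :=
      (hhf.comp_add_right _ _).ext_of_emod_three hhf (by simp [h0]) fun v => by
        have := hperiod v j
        have := hslope j
        omega
    linarith [congrFun hshift v]
  · funext x
    apply Fin.ext
    have := hmod (fun i => ((x i).val : ℤ))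
    rw [latticeProj_lift] at this
    exact_mod_cast (toCol_val h x).trans this

theorem injOn_toCol [NeZero n] : Set.InjOn (toCol n d) (QPset n d) := by
  intro h₁ hh₁ h₂ hh₂ hcol
  obtain ⟨hhf₁, h₁0⟩ := mem_homZeroLattice_of_mem_QPset hh₁
  obtain ⟨hhf₂, h₂0⟩ := mem_homZeroLattice_of_mem_QPset hh₂
  refine hhf₁.ext_of_emod_three hhf₂ (h₁0.trans h₂0.symm) fun v => ?_
  rw [← toCol_latticeProj hh₁, ← toCol_latticeProj hh₂, hcol]

end Torus

end P3C

theorem stmt4 (n d : ℕ) (hn : Even n) (hn2 : 2 ≤ n) :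
    (∀ h ∈ P3C.QPset n d, ∀ v : Fin d → ℤ,
        ((P3C.toCol n d h (P3C.latticeProj n d v) : ℕ) : ℤ) = h v % 3) ∧
    Set.BijOn (P3C.toCol n d) (P3C.QPset n d) (P3C.colZero n d) := by
  have : NeZero n := ⟨by omega⟩
  exact ⟨fun h hh v => P3C.toCol_latticeProj hh v,
    fun h hh => P3C.toCol_mem_colZero hh, P3C.injOn_toCol,
    fun f hf => P3C.exists_mem_QPset_toCol_eq hn hf⟩
end

section
/- Let n ≥ 2 be an integer and let U ⊆ ℤ^d be translation respecting of type 0 (i.e. |T_U| > 1 and T_U is totally ordered by inclusion). Then: (a) the union of all members of T_U equals ℤ^d; (b) there exists 1 ≤ i ≤ d such that for every v ∈ ℤ^d the line {v + k·e_i : k ∈ ℤ} intersects both U and U^c; (c) if U + n·e_1 ≠ U then for every v ∈ ℤ^d the line {v + k·e_1 : k ∈ ℤ} intersects both U and U^c. -/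
/-!
Since `T_U` has more than one member and the translates by the vectors `n • e_i` generate it,
some `U + n • e_i` differs from `U`; as `T_U` is a chain, `U + k • e_i ⊊ U` for `k = n` or
`k = -n`. The sets `U + m k • e_i` (`m ∈ ℤ`) then form a strictly decreasing chain of translates,
so consecutive members have disjoint edge boundaries. A lattice edge leaving the union of the
chain would lie on the boundary of two consecutive members, so by connectivity of `ℤ^d` the
union is everything, and dually the intersection is empty. Read along the line `v + ℤ e_i`,
this gives (b), and (c) when applied to `i = 1`; (a) follows as well.
-/

open Pointwise Set

theorem SimpleGraph.Preconnected.exists_adj_mem_notMem {V : Type*} {G : SimpleGraph V}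
    (hG : G.Preconnected) {S : Set V} (hne : S.Nonempty) (hS : S ≠ univ) :
    ∃ a b, G.Adj a b ∧ a ∈ S ∧ b ∉ S := by
  obtain ⟨u, hu⟩ := hne
  obtain ⟨v, hv⟩ := (ne_univ_iff_exists_notMem S).mp hS
  obtain ⟨p⟩ := hG u v
  obtain ⟨e, -, he⟩ := p.exists_boundary_dart S hu hv
  exact ⟨_, _, e.adj, he⟩

namespace P3C

variable {n d : ℕ} {U : Set (Fin d → ℤ)}

theorem latticeGraph_adj_add_single_one (v : Fin d → ℤ) (i : Fin d) :
    (latticeGraph d).Adj v (v + Pi.single i 1) :=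
  ⟨i, Or.inl (by simp), fun j hj => by simp [hj]⟩

theorem latticeGraph_reachable_add_single (v : Fin d → ℤ) (i : Fin d) (k : ℤ) :
    (latticeGraph d).Reachable v (v + Pi.single i k) := by
  induction k using Int.induction_on with
  | zero => simp
  | succ k ih =>
    rw [Pi.single_add, ← add_assoc]
    exact ih.trans (latticeGraph_adj_add_single_one _ i).reachable
  | pred k ih =>
    have h : v + Pi.single i (-(k : ℤ)) = v + Pi.single i (-(k : ℤ) - 1) + Pi.single i 1 := by
      rw [add_assoc, ← Pi.single_add, sub_add_cancel]
    rw [h] at ih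
    exact ih.trans (latticeGraph_adj_add_single_one _ i).reachable.symm

theorem latticeGraph_preconnected : (latticeGraph d).Preconnected := by
  intro u v
  have key : ∀ s : Finset (Fin d),
      (latticeGraph d).Reachable u (u + ∑ j ∈ s, Pi.single j ((v - u) j)) := by
    intro s
    induction s using Finset.induction_on with
    | empty => simp
    | insert j s hj ih =>
      rw [Finset.sum_insert hj, add_comm (Pi.single j _), ← add_assoc]
      exact ih.trans (latticeGraph_reachable_add_single _ j _)
  have h := key Finset.univ
  rwa [Finset.univ_sum_single, add_sub_cancel] at h

theorem edgeBdry_compl (U : Set (Fin d → ℤ)) : edgeBdry d Uᶜ = edgeBdry d U := by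
  ext p
  simp only [edgeBdry, mem_ofPred_eq, mem_compl_iff, not_not]
  tauto

theorem iUnion_eq_univ_of_edgeBdry_inter_succ_eq_empty {A : ℤ → Set (Fin d → ℤ)}
    (hA : ∀ m, A (m + 1) ⊆ A m) (hbd : ∀ m, edgeBdry d (A m) ∩ edgeBdry d (A (m + 1)) = ∅)
    (hne : (A 0).Nonempty) : ⋃ m, A m = univ := by
  by_contra hS
  obtain ⟨a, b, hab, ha, hb⟩ :=
    latticeGraph_preconnected.exists_adj_mem_notMem (hne.mono (subset_iUnion A 0)) hS
  obtain ⟨m, ham⟩ := mem_iUnion.mp ha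
  have hb' : ∀ k, b ∉ A k := fun k hk => hb (mem_iUnion_of_mem k hk)
  have ham' : a ∈ A (m - 1 + 1) := by rwa [sub_add_cancel]
  have hedge : (a, b) ∈ edgeBdry d (A (m - 1)) ∩ edgeBdry d (A (m - 1 + 1)) :=
    ⟨⟨hab, Or.inl ⟨hA _ ham', hb' _⟩⟩, ⟨hab, Or.inl ⟨ham', hb' _⟩⟩⟩
  rwa [hbd] at hedge

theorem image_add_right_eq_vadd_set (U : Set (Fin d → ℤ)) (x : Fin d → ℤ) :
    (fun u => u + x) '' U = x +ᵥ U := by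
  simp_rw [add_comm _ x]
  rfl

theorem vadd_mem_translates (U : Set (Fin d → ℤ)) {x : Fin d → ℤ} (hx : ∀ j, (n : ℤ) ∣ x j) :
    x +ᵥ U ∈ translates n d U :=
  ⟨x, hx, (image_add_right_eq_vadd_set U x).symm⟩

theorem self_mem_translates (U : Set (Fin d → ℤ)) : U ∈ translates n d U := by
  simpa using vadd_mem_translates (n := n) U (x := 0) fun _ => dvd_zero _

theorem dvd_single_apply {i : Fin d} {k : ℤ} (hk : (n : ℤ) ∣ k) (j : Fin d) :
    (n : ℤ) ∣ (Pi.single i k : Fin d → ℤ) j := by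
  rcases eq_or_ne j i with rfl | h <;> simp [*]

namespace TranslationRespecting

theorem edgeBdry_vadd_inter_eq_empty (hU : TranslationRespecting n d U) {x y : Fin d → ℤ}
    (hx : ∀ j, (n : ℤ) ∣ x j) (hy : ∀ j, (n : ℤ) ∣ y j) (hne : x +ᵥ U ≠ y +ᵥ U) :
    edgeBdry d (x +ᵥ U) ∩ edgeBdry d (y +ᵥ U) = ∅ :=
  (hU.2 _ (vadd_mem_translates U hx) _ (vadd_mem_translates U hy) hne).1

theorem exists_zsmul_vadd_mem_and_notMem (hU : TranslationRespecting n d U) {y : Fin d → ℤ}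
    (hy : ∀ j, (n : ℤ) ∣ y j) (hsub : y +ᵥ U ⊆ U) (hne : y +ᵥ U ≠ U) (v : Fin d → ℤ) :
    (∃ m : ℤ, v ∈ m • y +ᵥ U) ∧ ∃ m : ℤ, v ∉ m • y +ᵥ U := by
  have hdvd : ∀ (m : ℤ) j, (n : ℤ) ∣ (m • y) j := fun m j => by
    simpa using (hy j).mul_left m
  have hstep : ∀ m : ℤ, (m + 1) • y +ᵥ U = m • y +ᵥ (y +ᵥ U) := fun m => by
    rw [vadd_vadd, add_one_zsmul]
  have hmono : ∀ m : ℤ, (m + 1) • y +ᵥ U ⊆ m • y +ᵥ U := fun m => by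
    rw [hstep]
    exact vadd_set_mono hsub
  have hbd : ∀ m : ℤ, edgeBdry d (m • y +ᵥ U) ∩ edgeBdry d ((m + 1) • y +ᵥ U) = ∅ := fun m =>
    hU.edgeBdry_vadd_inter_eq_empty (hdvd m) (hdvd (m + 1))
      (by rw [hstep, Ne, vadd_left_cancel_iff]; exact hne.symm)
  have hneg : ∀ m : ℤ, -(m + 1) + 1 = -m := fun m => by ring
  constructor
  · have hcover := iUnion_eq_univ_of_edgeBdry_inter_succ_eq_empty hmono hbd
      (by simpa using nonempty_iff_ne_empty.mpr hU.1.1)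
    exact mem_iUnion.mp (hcover ▸ mem_univ v)
  · have hcover := iUnion_eq_univ_of_edgeBdry_inter_succ_eq_empty
      (A := fun m : ℤ => ((-m) • y +ᵥ U)ᶜ)
      (fun m => compl_subset_compl.mpr (by simpa [hneg] using hmono (-(m + 1))))
      (fun m => by simpa only [edgeBdry_compl, hneg, inter_comm] using hbd (-(m + 1)))
      (by simpa using nonempty_compl.mpr hU.1.2.1)
    obtain ⟨m, hm⟩ := mem_iUnion.mp (hcover ▸ mem_univ v)
    exact ⟨-m, hm⟩

theorem sUnion_translates_eq_univ (hU : TranslationRespecting n d U) {y : Fin d → ℤ}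
    (hy : ∀ j, (n : ℤ) ∣ y j) (hsub : y +ᵥ U ⊆ U) (hne : y +ᵥ U ≠ U) :
    ⋃₀ translates n d U = univ := by
  refine eq_univ_of_forall fun v => ?_
  obtain ⟨m, hm⟩ := (hU.exists_zsmul_vadd_mem_and_notMem hy hsub hne v).1
  exact ⟨_, vadd_mem_translates U fun j => by simpa using (hy j).mul_left m, hm⟩

theorem exists_add_single_mem_and_notMem (hU : TranslationRespecting n d U) {i : Fin d} {k : ℤ}
    (hk : (n : ℤ) ∣ k) (hsub : (Pi.single i k : Fin d → ℤ) +ᵥ U ⊆ U)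
    (hne : (Pi.single i k : Fin d → ℤ) +ᵥ U ≠ U) (v : Fin d → ℤ) :
    (∃ l : ℤ, v + Pi.single i l ∈ U) ∧ ∃ l : ℤ, v + Pi.single i l ∈ Uᶜ := by
  have hmem : ∀ m : ℤ,
      v ∈ m • (Pi.single i k : Fin d → ℤ) +ᵥ U ↔ v + Pi.single i (-(m * k)) ∈ U := fun m => by
    rw [mem_vadd_set_iff_neg_vadd_mem, vadd_eq_add, ← Pi.single_smul', ← Pi.single_neg,
      add_comm, smul_eq_mul]
  obtain ⟨⟨m, hm⟩, m', hm'⟩ :=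
    hU.exists_zsmul_vadd_mem_and_notMem (dvd_single_apply hk) hsub hne v
  exact ⟨⟨_, (hmem m).mp hm⟩, _, fun h => hm' ((hmem m').mpr h)⟩

end TranslationRespecting

namespace TypeZero

theorem exists_single_vadd_ne (hU : TypeZero n d U) :
    ∃ i, (Pi.single i (n : ℤ) : Fin d → ℤ) +ᵥ U ≠ U := by
  by_contra! h
  have hstab : ∀ x : Fin d → ℤ, (∀ j, (n : ℤ) ∣ x j) → x +ᵥ U = U := by
    intro x hx
    rw [← AddAction.mem_stabilizer_iff, ← Finset.univ_sum_single x]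
    refine AddSubgroup.sum_mem _ fun j _ => ?_
    obtain ⟨c, hc⟩ := hx j
    rw [hc, mul_comm, ← smul_eq_mul, Pi.single_smul']
    exact AddSubgroup.zsmul_mem _ (AddAction.mem_stabilizer_iff.mpr (h j)) c
  obtain ⟨A, ⟨x, hx, rfl⟩, B, ⟨y, hy, rfl⟩, hAB⟩ := hU.2.1
  rw [image_add_right_eq_vadd_set, image_add_right_eq_vadd_set, hstab x hx, hstab y hy] at hAB
  exact hAB rfl

theorem exists_single_vadd_ssubset (hU : TypeZero n d U) {i : Fin d}
    (hi : (Pi.single i (n : ℤ) : Fin d → ℤ) +ᵥ U ≠ U) :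
    ∃ k : ℤ, (n : ℤ) ∣ k ∧
      (Pi.single i k : Fin d → ℤ) +ᵥ U ⊆ U ∧ (Pi.single i k : Fin d → ℤ) +ᵥ U ≠ U := by
  rcases hU.2.2 _ (vadd_mem_translates U (dvd_single_apply dvd_rfl)) _ (self_mem_translates U)
    with h | h
  · exact ⟨n, dvd_rfl, h, hi⟩
  · refine ⟨-(n : ℤ), dvd_neg.mpr dvd_rfl, ?_, fun h' => hi ?_⟩
    · rwa [Pi.single_neg, ← subset_vadd_set_iff]
    · rw [Pi.single_neg, neg_vadd_eq_iff] at h'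
      exact h'.symm

end TypeZero

end P3C

theorem stmt12_general (n d : ℕ) (hd : 0 < d) (U : Set (Fin d → ℤ))
    (hU : P3C.TypeZero n d U) :
    (⋃₀ P3C.translates n d U = Set.univ) ∧
    (∃ i : Fin d, ∀ v : Fin d → ℤ,
      (∃ k : ℤ, v + Pi.single i k ∈ U) ∧ (∃ k : ℤ, v + Pi.single i k ∈ Uᶜ)) ∧
    ((fun u => u + Pi.single (⟨0, hd⟩ : Fin d) (n : ℤ)) '' U ≠ U →
      ∀ v : Fin d → ℤ,
        (∃ k : ℤ, v + Pi.single (⟨0, hd⟩ : Fin d) k ∈ U) ∧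
        (∃ k : ℤ, v + Pi.single (⟨0, hd⟩ : Fin d) k ∈ Uᶜ)) := by
  obtain ⟨i, hi⟩ := hU.exists_single_vadd_ne
  obtain ⟨k, hk, hsub, hne⟩ := hU.exists_single_vadd_ssubset hi
  refine ⟨hU.1.sUnion_translates_eq_univ (P3C.dvd_single_apply hk) hsub hne,
    ⟨i, hU.1.exists_add_single_mem_and_notMem hk hsub hne⟩, fun h₀ => ?_⟩
  rw [P3C.image_add_right_eq_vadd_set] at h₀
  obtain ⟨k₀, hk₀, hsub₀, hne₀⟩ := hU.exists_single_vadd_ssubset h₀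
  exact hU.1.exists_add_single_mem_and_notMem hk₀ hsub₀ hne₀

theorem stmt12 (n d : ℕ) (hn : 2 ≤ n) (hd : 0 < d) (U : Set (Fin d → ℤ))
    (hU : P3C.TypeZero n d U) :
    (⋃₀ P3C.translates n d U = Set.univ) ∧
    (∃ i : Fin d, ∀ v : Fin d → ℤ,
      (∃ k : ℤ, v + Pi.single i k ∈ U) ∧ (∃ k : ℤ, v + Pi.single i k ∈ Uᶜ)) ∧
    ((fun u => u + Pi.single (⟨0, hd⟩ : Fin d) (n : ℤ)) '' U ≠ U →
      ∀ v : Fin d → ℤ,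
        (∃ k : ℤ, v + Pi.single (⟨0, hd⟩ : Fin d) k ∈ U) ∧
        (∃ k : ℤ, v + Pi.single (⟨0, hd⟩ : Fin d) k ∈ Uᶜ)) :=
  stmt12_general n d hd U hU
end
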